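/- arXiv:1903.07957 — 3 statements merged into one kernel-verified Lean document; each statement's English description precedes it below -/
import Mathlib

section
/- A binary word w of length n is prefix normal if and only if |w[1,k]|₁ ≥ |w[j+1,j+k]|₁ holds for all integers k, j with 1 ≤ k ≤ j ≤ n−k. That is, to verify prefix normality it suffices to compare the prefix of length k with subwords starting at positions j+1 for j ranging only over k ≤ j ≤ n−k. -/
/-- Number of ones of the infinite binary word `w` in the 0-indexed
half-open interval of positions `[a, b)`. Thus `cnt w j (j+k)` is the number
of 1s in the subword `w[j+1, j+k]` (1-indexed), and `cnt w 0 k` is the number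
of 1s in the prefix of length `k`. -/
def cnt (w : ℕ → Bool) (a b : ℕ) : ℕ :=
  ((Finset.Ico a b).filter (fun i => w i = true)).card

/-- Extend a binary word of length `n` to an infinite word by `false`s. -/
def ext {n : ℕ} (w : Fin n → Bool) : ℕ → Bool :=
  fun i => if h : i < n then w ⟨i, h⟩ else false

/-- A binary word of length `n` is prefix normal if the number of 1s in any
subword is at most the number of 1s in the prefix of the same length:
`|w[1,k]|₁ ≥ |w[j+1,j+k]|₁` for all `0 ≤ k ≤ n`, `0 ≤ j ≤ n - k`. -/
def IsPrefixNormal (n : ℕ) (w : ℕ → Bool) : Prop :=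
  ∀ k j : ℕ, k ≤ n → j + k ≤ n → cnt w j (j + k) ≤ cnt w 0 k

lemma cnt_split (w : ℕ → Bool) {a b c : ℕ} (hab : a ≤ b) (hbc : b ≤ c) :
    cnt w a c = cnt w a b + cnt w b c := by
  unfold cnt
  rw [← Finset.Ico_union_Ico_eq_Ico hab hbc, Finset.filter_union,
    Finset.card_union_of_disjoint]
  exact Finset.disjoint_filter_filter (Finset.Ico_disjoint_Ico_consecutive a b c)

/-- A binary word `w` of length `n` is prefix normal iff
`|w[1,k]|₁ ≥ |w[j+1,j+k]|₁` holds for all `1 ≤ k ≤ j ≤ n - k`: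
it suffices to check starting positions `j + 1` with `k ≤ j ≤ n - k`. -/
theorem isPrefixNormal_iff_restricted (n : ℕ) (w : Fin n → Bool) :
    IsPrefixNormal n (ext w) ↔
      ∀ k j : ℕ, 1 ≤ k → k ≤ j → j + k ≤ n →
        cnt (ext w) j (j + k) ≤ cnt (ext w) 0 k := by
  constructor
  · intro h k j hk hkj hjk
    exact h k j (by omega) hjk
  · intro h k j hk hjk
    rcases Nat.eq_zero_or_pos k with hk0 | hk1
    · subst hk0
      simp [cnt]
    rcases Nat.eq_zero_or_pos j with hj0 | hj1
    · subst hj0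
      simp
    rcases le_or_gt k j with hle | hlt
    · exact h k j hk1 hle hjk
    · have e1 : cnt (ext w) j (j + k) = cnt (ext w) j k + cnt (ext w) k (j + k) :=
        cnt_split _ (by omega) (by omega)
      have e2 : cnt (ext w) 0 k = cnt (ext w) 0 j + cnt (ext w) j k :=
        cnt_split _ (by omega) (by omega)
      have h3 : cnt (ext w) k (k + j) ≤ cnt (ext w) 0 j :=
        h j k hj1 (by omega) (by omega)
      have : k + j = j + k := by omega
      rw [this] at h3
      omega
end

section
/- For any binary word w of length n, the prefix normal form w̃ of w satisfies f_{w̃} = f_w, and w̃ is the lexicographically maximal element of the equivalence class of w: every binary word v of length n with f_v = f_w satisfies v ≤ w̃ in the lexicographic order on {0,1}ⁿ (with 0 < 1). -/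
/-- The profile `f_w(k)` of a word of length `n`: the maximum number of 1s in
any subword of length `k`, i.e. `max_{0 ≤ j ≤ n-k} |w[j+1, j+k]|₁`. -/
def profile (n : ℕ) (w : ℕ → Bool) (k : ℕ) : ℕ :=
  (Finset.range (n - k + 1)).sup (fun j => cnt w j (j + k))

/-- Lexicographic order on binary words of length `n` (with `0 < 1`, i.e.
`false < true`, earlier positions more significant): `v ≤ u`. -/
def lexLE {n : ℕ} (v u : Fin n → Bool) : Prop :=
  v = u ∨ ∃ i : Fin n, v i = false ∧ u i = true ∧ ∀ j : Fin n, j < i → v j = u j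

lemma cnt_add (w : ℕ → Bool) {a b c : ℕ} (h1 : a ≤ b) (h2 : b ≤ c) :
    cnt w a c = cnt w a b + cnt w b c := by
  unfold cnt
  rw [← Finset.Ico_union_Ico_eq_Ico h1 h2, Finset.filter_union,
    Finset.card_union_of_disjoint]
  exact (Finset.Ico_disjoint_Ico_consecutive a b c).mono
    (Finset.filter_subset _ _) (Finset.filter_subset _ _)

lemma cnt_le_profile (n : ℕ) (w : ℕ → Bool) {k j : ℕ} (hj : j + k ≤ n) :
    cnt w j (j + k) ≤ profile n w k := by
  apply Finset.le_sup (f := fun j => cnt w j (j + k))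
  simp only [Finset.mem_range]
  omega

lemma prefix_le_profile (n : ℕ) (w : ℕ → Bool) {k : ℕ} (hk : k ≤ n) :
    cnt w 0 k ≤ profile n w k := by
  have := cnt_le_profile n w (j := 0) (k := k) (by omega)
  simpa using this

lemma profile_subadd (n : ℕ) (w : ℕ → Bool) {a b : ℕ} (hab : a + b ≤ n) :
    profile n w (a + b) ≤ profile n w a + profile n w b := by
  apply Finset.sup_le
  intro j hj
  simp only [Finset.mem_range] at hj
  have hjn : j + (a + b) ≤ n := by omega
  rw [cnt_add w (show j ≤ j + a by omega) (show j + a ≤ j + (a + b) by omega)]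
  have h1 : cnt w j (j + a) ≤ profile n w a := cnt_le_profile n w (by omega)
  have h2 : cnt w (j + a) (j + (a + b)) ≤ profile n w b := by
    have := cnt_le_profile n w (k := b) (j := j + a) (by omega)
    rwa [show j + a + b = j + (a + b) by omega] at this
  omega

lemma cnt_single (w : ℕ → Bool) (a : ℕ) :
    cnt w a (a + 1) = if w a then 1 else 0 := by
  unfold cnt
  rw [Nat.Ico_succ_singleton, Finset.filter_singleton]
  split <;> simp_all

/-- If `wt` is the prefix normal form of `w` (i.e. `|wt[1,k]|₁ = f_w(k)` for
all `0 ≤ k ≤ n`), then `f_wt = f_w`, and `wt` is the lexicographically maximal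
word among all words `v` of length `n` with `f_v = f_w`. -/
theorem pnf_same_profile_and_lex_max (n : ℕ) (w wt : Fin n → Bool)
    (hwt : ∀ k : ℕ, k ≤ n → cnt (ext wt) 0 k = profile n (ext w) k) :
    (∀ k : ℕ, k ≤ n → profile n (ext wt) k = profile n (ext w) k) ∧
    (∀ v : Fin n → Bool,
      (∀ k : ℕ, k ≤ n → profile n (ext v) k = profile n (ext w) k) →
      lexLE v wt) := by
  constructor
  · intro k hk
    apply le_antisymm
    · apply Finset.sup_le
      intro j hj
      simp only [Finset.mem_range] at hj
      have hjk : j + k ≤ n := by omega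
      have h1 : cnt (ext wt) 0 (j + k) = cnt (ext wt) 0 j + cnt (ext wt) j (j + k) :=
        cnt_add _ (by omega) (by omega)
      have h2 := hwt j (by omega)
      have h3 := hwt (j + k) hjk
      have h4 := profile_subadd n (ext w) (a := j) (b := k) hjk
      omega
    · rw [← hwt k hk]
      exact prefix_le_profile n (ext wt) hk
  · intro v hv
    by_cases hveq : v = wt
    · exact Or.inl hveq
    right
    have hne : ∃ i, ext v i ≠ ext wt i := by
      have : ¬∀ i, v i = wt i := fun h => hveq (funext h)
      push_neg at this
      obtain ⟨i, hi⟩ := this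
      exact ⟨i.1, by simpa [ext, i.2] using hi⟩
    set i0 := Nat.find hne with hi0def
    have hi0 : ext v i0 ≠ ext wt i0 := Nat.find_spec hne
    have hmin : ∀ j < i0, ext v j = ext wt j := by
      intro j hj
      have := Nat.find_min hne hj
      simpa using this
    have hi0n : i0 < n := by
      by_contra h
      apply hi0
      simp [ext, show ¬ i0 < n from h]
    have hpre : cnt (ext v) 0 i0 = cnt (ext wt) 0 i0 := by
      unfold cnt
      congr 1
      apply Finset.filter_congr
      intro x hx
      simp only [Finset.mem_Ico] at hx
      rw [hmin x hx.2]
    cases hv0 : ext v i0 <;> cases hw0 : ext wt i0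
    · exact absurd (hv0.trans hw0.symm) hi0
    · -- v i0 = false, wt i0 = true : lex witness
      refine ⟨⟨i0, hi0n⟩, ?_, ?_, ?_⟩
      · simpa [ext, hi0n] using hv0
      · simpa [ext, hi0n] using hw0
      · intro j hj
        have := hmin j.1 hj
        simpa [ext, j.2] using this
    · -- v i0 = true, wt i0 = false : contradiction
      exfalso
      have h1 : cnt (ext v) 0 (i0 + 1) = cnt (ext v) 0 i0 + cnt (ext v) i0 (i0 + 1) :=
        cnt_add _ (by omega) (by omega)
      have h2 : cnt (ext wt) 0 (i0 + 1) = cnt (ext wt) 0 i0 + cnt (ext wt) i0 (i0 + 1) :=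
        cnt_add _ (by omega) (by omega)
      have s1 : cnt (ext v) i0 (i0 + 1) = 1 := by rw [cnt_single, hv0]; rfl
      have s2 : cnt (ext wt) i0 (i0 + 1) = 0 := by rw [cnt_single, hw0]; rfl
      have e1 := hwt i0 (by omega)
      have e2 := hwt (i0 + 1) (by omega)
      have e3 := hv (i0 + 1) (by omega)
      have e4 : cnt (ext v) 0 (i0 + 1) ≤ profile n (ext v) (i0 + 1) :=
        prefix_le_profile n (ext v) (by omega)
      omega
    · exact absurd (hv0.trans hw0.symm) hi0
end

section
/- Fix a constant c > √2 and define p_k = 1 if k ≤ 16c²·log n, and p_k = 1/2 + c·√((log n)/k) otherwise. Let w be a random binary word of length n with independent letters, where w_k = 1 with probability p_k. Then for all sufficiently large n and all integers k, j with 16c²·log n < k ≤ j ≤ n−k, the probability that |w[1,k]|₁ < |w[j+1,j+k]|₁ is at most exp(−c²·log n) = n^(−c²). -/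
/-- The probability `p_k` that the `k`-th letter (1-indexed) of the random
word of length `n` equals `1`: equal to `1` if `k ≤ 16 c² log n`, and to
`1/2 + c √(log n / k)` otherwise. Logarithms are natural. -/
noncomputable def pr (c : ℝ) (n k : ℕ) : ℝ :=
  if (k : ℝ) ≤ 16 * c ^ 2 * Real.log n then 1
  else 1 / 2 + c * Real.sqrt (Real.log n / k)

/-- The probability of picking the word `w : Fin n → Bool` when the letters
are independent with `P(w_k = 1) = p_k` (positions 1-indexed). -/
noncomputable def wordProb (c : ℝ) (n : ℕ) (w : Fin n → Bool) : ℝ :=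
  ∏ i : Fin n, (if w i then pr c n (i.1 + 1) else 1 - pr c n (i.1 + 1))

/-!
Let `X` and `Y` count the ones of `w` in the prefix `[1, k]` and in the window `[j + 1, j + k]`,
and let `D = E X - E Y`. Both are sums of independent Bernoulli letters on disjoint blocks of
`k` positions, so Hoeffding's lemma applied to the exponential tilt `t (1_Y - 1_X)` with
`t = 2D / k` bounds `P(X ≤ Y)` by `exp(-D² / k)`.

It remains to show `D ≥ c √(k log n)`. Write `C = c √(log n)` and `m = ⌊16 c² log n⌋`. Comparing
with `∫ x^{-1/2} dx`, the prefix exceeds `k / 2` by at least `m / 2 + 2C (√(k + 1) - √(m + 1))`,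
while the window, which starts beyond `k`, exceeds `k / 2` by at most
`2C (√(j + k) - √j) ≤ 2C (√(2k) - √k)`. As `4C ≤ √(m + 1)`, the terms in `m` cost at most `1 / 2`,
and `2 (2 - √2) > 1` leaves enough room once `C √k ≥ 4`.
-/

open Finset Real ProbabilityTheory MeasureTheory

theorem bernoulli_mgf_le {p : ℝ} (hp₀ : 0 ≤ p) (hp₁ : p ≤ 1) (t : ℝ) :
    1 - p + p * exp t ≤ exp (p * t + t ^ 2 / 8) := by
  set μ : Measure Bool := bernoulliMeasure true false ⟨p, hp₀, hp₁⟩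
  set X : Bool → ℝ := fun b => if b then 1 else 0
  have hmean : μ[X] = p := by simp [μ, X, integral_bernoulliMeasure]
  have hoeffding := hasSubgaussianMGF_of_mem_Icc (μ := μ) (X := X) (a := 0) (b := 1)
    (measurable_of_finite X).aemeasurable (ae_of_all _ fun b => by cases b <;> simp [X]) |>.mgf_le t
  simp only [mgf, integral_bernoulliMeasure, μ, hmean, X] at hoeffding
  norm_num at hoeffding
  have h₁ : exp (p * t) * exp (t * (1 - p)) = exp t := by rw [← exp_add]; ring_nf
  have h₂ : exp (p * t) * exp (-(t * p)) = 1 := by rw [← exp_add]; ring_nf; exact exp_zero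
  calc 1 - p + p * exp t
      = exp (p * t) * (p * exp (t * (1 - p)) + (1 - p) * exp (-(t * p))) := by
        linear_combination (-p) * h₁ - (1 - p) * h₂
    _ ≤ exp (p * t) * exp (1 / 4 * t ^ 2 / 2) := by gcongr
    _ = exp (p * t + t ^ 2 / 8) := by rw [← exp_add]; ring_nf

section BernoulliProduct

variable {ι : Type*} [Fintype ι] {p : ι → ℝ}

noncomputable def bernoulliProd (p : ι → ℝ) (w : ι → Bool) : ℝ :=
  ∏ i, if w i then p i else 1 - p i

theorem bernoulliProd_nonneg (hp₀ : ∀ i, 0 ≤ p i) (hp₁ : ∀ i, p i ≤ 1) (w : ι → Bool) :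
    0 ≤ bernoulliProd p w :=
  prod_nonneg fun i _ => by split <;> linarith [hp₀ i, hp₁ i]

variable [DecidableEq ι]

theorem sum_bernoulliProd_mul_exp (e : ι → ℝ) :
    ∑ w, bernoulliProd p w * exp (∑ i, if w i then e i else 0) =
      ∏ i, (1 - p i + p i * exp (e i)) := by
  calc ∑ w, bernoulliProd p w * exp (∑ i, if w i then e i else 0)
      = ∑ w : ι → Bool, ∏ i, (if w i then p i else 1 - p i) * exp (if w i then e i else 0) := by
        simp only [bernoulliProd, exp_sum, prod_mul_distrib]
    _ = ∏ i, ∑ b : Bool, (if b then p i else 1 - p i) * exp (if b then e i else 0) := by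
        rw [Fintype.prod_sum]
    _ = ∏ i, (1 - p i + p i * exp (e i)) := by simp [add_comm]

theorem sum_bernoulliProd_le_exp (hp₀ : ∀ i, 0 ≤ p i) (hp₁ : ∀ i, p i ≤ 1) (e : ι → ℝ) :
    ∑ w with 0 ≤ ∑ i, (if w i then e i else 0), bernoulliProd p w ≤
      exp (∑ i, (p i * e i + e i ^ 2 / 8)) := by
  calc ∑ w with 0 ≤ ∑ i, (if w i then e i else 0), bernoulliProd p w
      ≤ ∑ w with 0 ≤ ∑ i, (if w i then e i else 0),
          bernoulliProd p w * exp (∑ i, if w i then e i else 0) :=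
        sum_le_sum fun w hw => le_mul_of_one_le_right (bernoulliProd_nonneg hp₀ hp₁ w)
          (one_le_exp (mem_filter.1 hw).2)
    _ ≤ ∑ w, bernoulliProd p w * exp (∑ i, if w i then e i else 0) :=
        sum_le_sum_of_subset_of_nonneg (filter_subset _ _) fun w _ _ =>
          mul_nonneg (bernoulliProd_nonneg hp₀ hp₁ w) (exp_nonneg _)
    _ = ∏ i, (1 - p i + p i * exp (e i)) := sum_bernoulliProd_mul_exp e
    _ ≤ ∏ i, exp (p i * e i + e i ^ 2 / 8) :=
        prod_le_prod (fun i _ => by nlinarith [hp₀ i, hp₁ i, exp_pos (e i)])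
          fun i _ => bernoulli_mgf_le (hp₀ i) (hp₁ i) (e i)
    _ = exp (∑ i, (p i * e i + e i ^ 2 / 8)) := (exp_sum _ _).symm

theorem sum_ite_mem_ite_mem {M : Type*} [AddCommMonoid M] {X Y : Finset ι} (hXY : Disjoint X Y)
    (f g : ι → M) :
    ∑ i, (if i ∈ Y then f i else if i ∈ X then g i else 0) = ∑ i ∈ Y, f i + ∑ i ∈ X, g i := by
  rw [sum_ite, sum_ite_mem, filter_mem_eq_inter, univ_inter]
  congr 2
  ext i
  simpa using fun hi => disjoint_left.1 hXY hi

theorem sum_bernoulliProd_card_filter_le_card_filter_le (hp₀ : ∀ i, 0 ≤ p i)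
    (hp₁ : ∀ i, p i ≤ 1) {X Y : Finset ι} (hXY : Disjoint X Y) (hcard : #Y = #X)
    (hmean : ∑ i ∈ Y, p i ≤ ∑ i ∈ X, p i) :
    ∑ w with #{i ∈ X | w i} ≤ #{i ∈ Y | w i}, bernoulliProd p w ≤
      exp (-(∑ i ∈ X, p i - ∑ i ∈ Y, p i) ^ 2 / #X) := by
  set D := ∑ i ∈ X, p i - ∑ i ∈ Y, p i
  -- minimises the Chernoff exponent `-t D + #X t² / 4`; for `X = ∅` it is `0` and so is the bound
  set t := 2 * D / #X
  set e : ι → ℝ := fun i => if i ∈ Y then t else if i ∈ X then -t else 0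
  have ht : 0 ≤ t := by have : 0 ≤ D := sub_nonneg.2 hmean; positivity
  have hstat (w : ι → Bool) :
      ∑ i, (if w i then e i else 0) = t * (#{i ∈ Y | w i} - #{i ∈ X | w i}) := by
    calc ∑ i, (if w i then e i else 0)
        = ∑ i, (if i ∈ Y then t * (if w i then 1 else 0)
            else if i ∈ X then -(t * (if w i then 1 else 0)) else 0) :=
          sum_congr rfl fun i _ => by simp only [e]; split_ifs <;> simp
      _ = t * (#{i ∈ Y | w i} - #{i ∈ X | w i}) := by
          rw [sum_ite_mem_ite_mem hXY, sum_neg_distrib, ← mul_sum, ← mul_sum, sum_boole,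
            sum_boole]
          ring
  have hdrift : ∑ i, p i * e i = -(t * D) := by
    calc ∑ i, p i * e i
        = ∑ i, (if i ∈ Y then t * p i else if i ∈ X then -(t * p i) else 0) :=
          sum_congr rfl fun i _ => by simp only [e]; split_ifs <;> ring
      _ = -(t * D) := by rw [sum_ite_mem_ite_mem hXY, sum_neg_distrib, ← mul_sum, ← mul_sum]; ring
  have hvar : ∑ i, e i ^ 2 = 2 * #X * t ^ 2 := by
    calc ∑ i, e i ^ 2 = ∑ i, (if i ∈ Y then t ^ 2 else if i ∈ X then t ^ 2 else 0) :=
          sum_congr rfl fun i _ => by simp only [e]; split_ifs <;> ring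
      _ = 2 * #X * t ^ 2 := by rw [sum_ite_mem_ite_mem hXY]; simp [hcard]; ring
  calc ∑ w with #{i ∈ X | w i} ≤ #{i ∈ Y | w i}, bernoulliProd p w
      ≤ ∑ w with 0 ≤ ∑ i, (if w i then e i else 0), bernoulliProd p w := by
        refine sum_le_sum_of_subset_of_nonneg (monotone_filter_right _ fun w _ hw => ?_)
          fun w _ _ => bernoulliProd_nonneg hp₀ hp₁ w
        rw [hstat]
        exact mul_nonneg ht (sub_nonneg.2 (by exact_mod_cast hw))
    _ ≤ exp (∑ i, (p i * e i + e i ^ 2 / 8)) := sum_bernoulliProd_le_exp hp₀ hp₁ e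
    _ = exp (-D ^ 2 / #X) := by
        rw [sum_add_distrib, ← sum_div, hdrift, hvar]
        rcases eq_or_ne (#X : ℝ) 0 with hX | hX
        · simp [t, hX]
        · congr 1
          simp only [t]
          field_simp
          ring

end BernoulliProduct

theorem inv_sqrt_add_one_le_two_mul_sqrt_sub {x : ℝ} (hx : 0 ≤ x) :
    (√(x + 1))⁻¹ ≤ 2 * (√(x + 1) - √x) := by
  have hpos : 0 < √(x + 1) := sqrt_pos.2 (by linarith)
  rw [inv_le_iff_one_le_mul₀' hpos]
  nlinarith [sq_nonneg (√(x + 1) - √x), sq_sqrt hx, sq_sqrt (by linarith : 0 ≤ x + 1)]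

theorem two_mul_sqrt_add_one_sub_le_inv_sqrt {x : ℝ} (hx : 0 < x) :
    2 * (√(x + 1) - √x) ≤ (√x)⁻¹ := by
  have hpos : 0 < √x := sqrt_pos.2 hx
  rw [← one_div, le_div_iff₀ hpos]
  nlinarith [sq_nonneg (√(x + 1) - √x), sq_sqrt hx.le, sq_sqrt (by linarith : 0 ≤ x + 1)]

theorem sum_Ico_inv_sqrt_le_two_mul_sqrt_sub {a b : ℕ} (hab : a ≤ b) :
    ∑ i ∈ Ico a b, (√((i : ℝ) + 1))⁻¹ ≤ 2 * (√b - √a) := by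
  calc ∑ i ∈ Ico a b, (√((i : ℝ) + 1))⁻¹
      ≤ ∑ i ∈ Ico a b, 2 * (√((i + 1 : ℕ) : ℝ) - √(i : ℝ)) :=
        sum_le_sum fun i _ => by
          push_cast; exact inv_sqrt_add_one_le_two_mul_sqrt_sub i.cast_nonneg
    _ = 2 * (√b - √a) := by rw [← mul_sum, sum_Ico_sub (fun i : ℕ => √(i : ℝ)) hab]

theorem two_mul_sqrt_sub_le_sum_Ico_inv_sqrt {a b : ℕ} (hab : a ≤ b) :
    2 * (√((b : ℝ) + 1) - √((a : ℝ) + 1)) ≤ ∑ i ∈ Ico a b, (√((i : ℝ) + 1))⁻¹ := by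
  calc 2 * (√((b : ℝ) + 1) - √((a : ℝ) + 1))
      = ∑ i ∈ Ico a b, 2 * (√((i + 1 + 1 : ℕ) : ℝ) - √((i + 1 : ℕ) : ℝ)) := by
        rw [← mul_sum, sum_Ico_sub (fun i : ℕ => √((i + 1 : ℕ) : ℝ)) hab]; push_cast; rfl
    _ ≤ ∑ i ∈ Ico a b, (√((i : ℝ) + 1))⁻¹ :=
        sum_le_sum fun i _ => by
          push_cast; exact two_mul_sqrt_add_one_sub_le_inv_sqrt (by positivity)

theorem sqrt_add_sub_sqrt_le {j k : ℝ} (hk : 0 ≤ k) (hkj : k ≤ j) :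
    √(j + k) - √j ≤ √(2 * k) - √k := by
  have hj : 0 ≤ j := hk.trans hkj
  have hcross : √(j + k) * √k ≤ √(2 * k) * √j := by
    rw [← sqrt_mul (by linarith), ← sqrt_mul (by linarith)]
    exact sqrt_le_sqrt (by nlinarith)
  have hsq : (√(j + k) + √k) ^ 2 ≤ (√(2 * k) + √j) ^ 2 := by
    nlinarith [sq_sqrt hk, sq_sqrt hj, sq_sqrt (by linarith : 0 ≤ j + k),
      sq_sqrt (by linarith : 0 ≤ 2 * k)]
  have := (pow_le_pow_iff_left₀ (by positivity) (by positivity) two_ne_zero).1 hsq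
  linarith

theorem mul_sqrt_le_half_add_mul_sum_sub_sum {C : ℝ} {m k j : ℕ} (hC : 0 ≤ C)
    (hCm : 16 * C ^ 2 ≤ m + 1) (hmk : m ≤ k) (hkj : k ≤ j) (hCk : 16 ≤ C ^ 2 * k) :
    C * √k ≤ m / 2 + C * (∑ i ∈ Ico m k, (√((i : ℝ) + 1))⁻¹ -
      ∑ i ∈ Ico j (j + k), (√((i : ℝ) + 1))⁻¹) := by
  have hA := two_mul_sqrt_sub_le_sum_Ico_inv_sqrt hmk
  have hB : ∑ i ∈ Ico j (j + k), (√((i : ℝ) + 1))⁻¹ ≤ 2 * (√(2 * k) - √k) := by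
    have := sum_Ico_inv_sqrt_le_two_mul_sqrt_sub (Nat.le_add_right j k)
    push_cast at this
    linarith [sqrt_add_sub_sqrt_le k.cast_nonneg (Nat.cast_le.2 hkj : (k : ℝ) ≤ j)]
  have h4C : 4 * C ≤ √(m + 1) := (le_sqrt (by positivity) (by positivity)).2 (by linarith)
  have hCm' : 4 * C * √(m + 1) ≤ m + 1 := by
    nlinarith [sq_sqrt (by positivity : (0 : ℝ) ≤ m + 1), sqrt_nonneg ((m : ℝ) + 1)]
  have hsqrt2 : √(2 * k) ≤ 1.42 * √k := by
    rw [sqrt_mul zero_le_two]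
    gcongr
    exact ((sqrt_lt' (by norm_num)).2 (by norm_num)).le
  have hCk' : 4 ≤ C * √k := by
    rw [← sqrt_sq hC, ← sqrt_mul (sq_nonneg C)]
    exact (le_sqrt (by norm_num) (by positivity)).2 (by linarith)
  have hk : C * √k ≤ C * √((k : ℝ) + 1) := by gcongr; linarith
  have hAB := mul_le_mul_of_nonneg_left (sub_le_sub hA hB) hC
  linarith [mul_le_mul_of_nonneg_left hsqrt2 hC]

section RandomWord

variable {c : ℝ} {n : ℕ}

theorem pr_of_le {k : ℕ} (hk : (k : ℝ) ≤ 16 * c ^ 2 * log n) : pr c n k = 1 := if_pos hk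

theorem pr_of_lt {k : ℕ} (hL : 0 ≤ log n) (hk : 16 * c ^ 2 * log n < k) :
    pr c n k = 1 / 2 + c * √(log n) * (√(k : ℝ))⁻¹ := by
  rw [pr, if_neg hk.not_ge, sqrt_div hL]
  ring

theorem pr_nonneg (hc : 0 ≤ c) (k : ℕ) : 0 ≤ pr c n k := by
  unfold pr; split <;> positivity

theorem pr_le_one (hc : 0 ≤ c) (k : ℕ) : pr c n k ≤ 1 := by
  unfold pr
  split_ifs with hk
  · exact le_rfl
  have hratio : c ^ 2 * (log n / k) ≤ (1 / 4) ^ 2 := by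
    rcases eq_or_ne (k : ℝ) 0 with h0 | h0
    · simp [h0]
    rw [mul_div_assoc', div_le_iff₀ (lt_of_le_of_ne k.cast_nonneg h0.symm)]
    linarith
  have : c * √(log n / k) ≤ 1 / 4 := by
    rw [← sqrt_sq hc, ← sqrt_mul (sq_nonneg c)]
    exact (sqrt_le_sqrt hratio).trans_eq (sqrt_sq (by norm_num))
  linarith

theorem mul_sqrt_le_sum_pr_sub_sum_pr {k j : ℕ} (hc : 0 ≤ c) (hcL : 1 ≤ c ^ 2 * log n)
    (hk : 16 * c ^ 2 * log n < k) (hkj : k ≤ j) :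
    c * √(log n) * √k ≤
      ∑ i ∈ Ico 0 k, pr c n (i + 1) - ∑ i ∈ Ico j (j + k), pr c n (i + 1) := by
  set L := log n
  have hL : 0 ≤ L := by by_contra! h; nlinarith [sq_nonneg c]
  -- `pr` is 1-indexed: the letters at 0-indexed positions `i < m` are forced to be ones
  set m := ⌊16 * c ^ 2 * L⌋₊
  have hT : 0 ≤ 16 * c ^ 2 * L := by positivity
  have hmT : (m : ℝ) ≤ 16 * c ^ 2 * L := Nat.floor_le hT
  have hTm : 16 * c ^ 2 * L < m + 1 := Nat.lt_floor_add_one _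
  have hmk : m ≤ k := ((Nat.floor_lt hT).2 hk).le
  have hdecay {a b : ℕ} (ha : m ≤ a) : ∑ i ∈ Ico a b, pr c n (i + 1) =
      ∑ i ∈ Ico a b, (1 / 2 + c * √L * (√((i : ℝ) + 1))⁻¹) :=
    sum_congr rfl fun i hi => by
      have hi' : (m : ℝ) + 1 ≤ (i + 1 : ℕ) := by
        exact_mod_cast Nat.succ_le_succ (ha.trans (mem_Ico.1 hi).1)
      rw [pr_of_lt hL (hTm.trans_le hi')]
      push_cast; rfl
  have hflat : ∑ i ∈ Ico 0 m, pr c n (i + 1) = m := by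
    rw [sum_congr rfl fun i hi => pr_of_le (hmT.trans' (by exact_mod_cast (mem_Ico.1 hi).2))]
    simp
  rw [← sum_Ico_consecutive _ (Nat.zero_le m) hmk, hflat, hdecay le_rfl,
    hdecay (hmk.trans hkj), sum_add_distrib, sum_add_distrib, ← mul_sum, ← mul_sum]
  have hgap := mul_sqrt_le_half_add_mul_sum_sub_sum (C := c * √L) (by positivity)
    (by rw [mul_pow, sq_sqrt hL]; linarith) hmk hkj
    (by rw [mul_pow, sq_sqrt hL]; nlinarith)
  simp only [sum_const, Nat.card_Ico, nsmul_eq_mul, Nat.cast_sub hmk, Nat.add_sub_cancel_left]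
  linarith

theorem cnt_ext_eq_card_filter_attachFin {n a b : ℕ} (w : Fin n → Bool)
    (h : ∀ m ∈ Ico a b, m < n) : cnt (ext w) a b = #{i ∈ (Ico a b).attachFin h | w i} := by
  rw [cnt, ← card_map Fin.valEmbedding]
  congr 1
  ext x
  have := h x
  simp only [mem_filter, mem_map, mem_attachFin, Fin.valEmbedding_apply, Fin.exists_iff, _root_.ext]
  aesop

theorem sum_attachFin_val {M : Type*} [AddCommMonoid M] {n : ℕ} {s : Finset ℕ}
    (h : ∀ m ∈ s, m < n) (f : ℕ → M) : ∑ i ∈ s.attachFin h, f i = ∑ i ∈ s, f i := by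
  conv_rhs => rw [← map_valEmbedding_attachFin h, sum_map]
  rfl

theorem sum_wordProb_cnt_lt_cnt_le (hc : 0 ≤ c) {k j : ℕ} (hkj : k ≤ j) (hjk : j + k ≤ n)
    (hmean : ∑ i ∈ Ico j (j + k), pr c n (i + 1) ≤ ∑ i ∈ Ico 0 k, pr c n (i + 1)) :
    ∑ w with cnt (ext w) 0 k < cnt (ext w) j (j + k), wordProb c n w ≤
      exp (-(∑ i ∈ Ico 0 k, pr c n (i + 1) - ∑ i ∈ Ico j (j + k), pr c n (i + 1)) ^ 2 / k) := by
  have hX : ∀ m ∈ Ico 0 k, m < n := fun m hm => by have := mem_Ico.1 hm; omega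
  have hY : ∀ m ∈ Ico j (j + k), m < n := fun m hm => by have := mem_Ico.1 hm; omega
  have hp₀ (i : Fin n) : 0 ≤ pr c n (i + 1) := pr_nonneg hc _
  have hp₁ (i : Fin n) : pr c n (i + 1) ≤ 1 := pr_le_one hc _
  have hsumX := sum_attachFin_val hX (fun i => pr c n (i + 1))
  have hsumY := sum_attachFin_val hY (fun i => pr c n (i + 1))
  calc ∑ w with cnt (ext w) 0 k < cnt (ext w) j (j + k), wordProb c n w
      ≤ ∑ w with #{i ∈ (Ico 0 k).attachFin hX | w i} ≤ #{i ∈ (Ico j (j + k)).attachFin hY | w i},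
          bernoulliProd (fun i : Fin n => pr c n (i + 1)) w := by
        refine sum_le_sum_of_subset_of_nonneg (monotone_filter_right _ fun w _ hw => ?_)
          fun w _ _ => bernoulliProd_nonneg hp₀ hp₁ w
        rw [← cnt_ext_eq_card_filter_attachFin, ← cnt_ext_eq_card_filter_attachFin]
        exact hw.le
    _ ≤ _ := by
        have := sum_bernoulliProd_card_filter_le_card_filter_le hp₀ hp₁
          (X := (Ico 0 k).attachFin hX) (Y := (Ico j (j + k)).attachFin hY)
          (disjoint_left.2 fun i hi hi' => by simp only [mem_attachFin, mem_Ico] at hi hi'; omega)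
          (by simp)
          (by rwa [hsumX, hsumY])
        simpa only [hsumX, hsumY, card_attachFin, Nat.card_Ico, Nat.sub_zero] using this

end RandomWord

open scoped Classical in
/-- Fix `c > √2`. For the random word of length `n` with independent letters,
where `w_k = 1` with probability `p_k`: for all sufficiently large `n` and all
integers `k, j` with `16 c² log n < k ≤ j ≤ n - k`, the probability that
`|w[1,k]|₁ < |w[j+1,j+k]|₁` is at most `exp(-c² log n) = n^(-c²)`. -/
theorem random_word_bad_event_prob_bound (c : ℝ) (hc : Real.sqrt 2 < c) :
    ∀ᶠ n : ℕ in Filter.atTop, ∀ k j : ℕ,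
      16 * c ^ 2 * Real.log n < (k : ℝ) → k ≤ j → j + k ≤ n →
      (∑ w ∈ Finset.univ.filter (fun w : Fin n → Bool =>
          cnt (ext w) 0 k < cnt (ext w) j (j + k)),
        wordProb c n w) ≤ Real.exp (-(c ^ 2) * Real.log n) := by
  have hc₀ : 0 < c := (sqrt_nonneg 2).trans_lt hc
  have hc₂ : 2 < c ^ 2 := (sqrt_lt' hc₀).1 hc
  filter_upwards [Filter.eventually_ge_atTop 2] with n hn k j hk hkj hjk
  have hcL : 1 ≤ c ^ 2 * log n := by
    have : log 2 ≤ log n := log_le_log two_pos (by exact_mod_cast hn)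
    nlinarith [log_two_gt_d9]
  have hgap := mul_sqrt_le_sum_pr_sub_sum_pr hc₀.le hcL hk hkj
  have hk₀ : (0 : ℝ) < k := lt_of_le_of_lt (by positivity) hk
  refine (sum_wordProb_cnt_lt_cnt_le hc₀.le hkj hjk
    (sub_nonneg.1 (hgap.trans' (by positivity)))).trans (exp_le_exp.2 ?_)
  rw [neg_mul, neg_div, neg_le_neg_iff, le_div_iff₀ hk₀]
  have := pow_le_pow_left₀ (by positivity) hgap 2
  rwa [mul_pow, mul_pow, sq_sqrt (log_nonneg (by exact_mod_cast hn.trans' one_le_two)),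
    sq_sqrt hk₀.le] at this
end
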